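/- Let m ≥ 2, n = 2d, and let J = [[j_0,k_0],...,[j_d,k_d]] be a partition of {0,...,n+1} into pairs with j_i < k_i and j_0 < ... < j_d. In the ring R_J := Z[t_1,...,t_{n+1}]/(t_1^m−1,...,t_{n+1}^m−1, t_{j_1}t_{k_1}−1,...,t_{j_d}t_{k_d}−1) (where t_0 := (t_1···t_{n+1})^{-1} and automatically t_{j_0}t_{k_0} = 1), the natural map from Z[t_{k_0},...,t_{k_d}]/(t_{k_0}^m−1,...,t_{k_d}^m−1) is an isomorphism; in particular R_J is a free Z-module of rank m^{d+1}. -/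

import Mathlib

/-!
Write `A_ι = ℤ[t_ν : ν ∈ ι] / (t_ν ^ m - 1)`. In `R_J` the relation `t_0 ⋯ t_{n+1} = 1` is the
product over all pairs of `t_{j_ν} t_{k_ν}`, so it forces the one missing pair relation
`t_{j_0} t_{k_0} = 1`. Since every `t_{k_ν}` has inverse `t_{k_ν} ^ (m - 1)`, the variables
`t_{j_ν}` can then be eliminated, and `ν ↦ t_{k_ν}` presents `R_J` as `A_{d+1}`: the inverse map
sends `t_{k_ν} ↦ t_ν` and `t_{j_ν} ↦ t_ν ^ (m - 1)`, which respects all relations of `R_J`.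

Freeness: `A_{s+1} ≅ A_s[X] / (X ^ m - 1)` and `X ^ m - 1` is monic, so by induction `A_s` is
free over the base ring with the monomial basis of size `m ^ s`.
-/

open MvPolynomial

noncomputable section

theorem AdjoinRoot.root_X_pow_sub_one_pow {A : Type*} [CommRing A] (m : ℕ) :
    AdjoinRoot.root (Polynomial.X ^ m - 1 : Polynomial A) ^ m = 1 := by
  have h := AdjoinRoot.eval₂_root (Polynomial.X ^ m - 1 : Polynomial A)
  rwa [Polynomial.eval₂_sub, Polynomial.eval₂_X_pow, Polynomial.eval₂_one, sub_eq_zero] at h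

namespace Function.Bijective

variable {ι κ M : Type*} [CommMonoid M] {j k : ι → κ}

theorem prod_eq_prod_mul_of_sumElim [Fintype ι] [Fintype κ] (hjk : Bijective (Sum.elim j k))
    (f : κ → M) : ∏ r, f r = ∏ ν, f (j ν) * f (k ν) := by
  rw [← Equiv.prod_comp (Equiv.ofBijective _ hjk), Fintype.prod_sum_type,
    ← Finset.prod_mul_distrib]
  rfl

theorem mul_eq_one_of_prod_eq_one_of_sumElim [Fintype ι] [Fintype κ]
    (hjk : Bijective (Sum.elim j k)) {f : κ → M} (hf : ∏ r, f r = 1) {ν₀ : ι}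
    (h : ∀ ν, ν ≠ ν₀ → f (j ν) * f (k ν) = 1) (ν : ι) : f (j ν) * f (k ν) = 1 := by
  obtain rfl | hν := eq_or_ne ν ν₀
  · rwa [← Fintype.prod_eq_single ν h, ← hjk.prod_eq_prod_mul_of_sumElim]
  · exact h ν hν

/-- `x ν ^ (m - 1)` stands for `(x ν)⁻¹`, which it is when `x ν ^ m = 1` and `m ≠ 0`. -/
def pairedPoint (hjk : Bijective (Sum.elim j k)) (m : ℕ) (x : ι → M) : κ → M :=
  fun r ↦ Sum.elim (fun ν ↦ x ν ^ (m - 1)) x ((Equiv.ofBijective _ hjk).symm r)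

@[simp]
theorem pairedPoint_left (hjk : Bijective (Sum.elim j k)) (m : ℕ) (x : ι → M) (ν : ι) :
    hjk.pairedPoint m x (j ν) = x ν ^ (m - 1) := by
  rw [pairedPoint, show j ν = Sum.elim j k (.inl ν) from rfl, Equiv.ofBijective_symm_apply_apply,
    Sum.elim_inl]

@[simp]
theorem pairedPoint_right (hjk : Bijective (Sum.elim j k)) (m : ℕ) (x : ι → M) (ν : ι) :
    hjk.pairedPoint m x (k ν) = x ν := by
  rw [pairedPoint, show k ν = Sum.elim j k (.inr ν) from rfl, Equiv.ofBijective_symm_apply_apply,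
    Sum.elim_inr]

theorem pairedPoint_mul_pairedPoint (hjk : Bijective (Sum.elim j k)) {m : ℕ} (hm : m ≠ 0)
    {x : ι → M} (hx : ∀ ν, x ν ^ m = 1) (ν : ι) :
    hjk.pairedPoint m x (j ν) * hjk.pairedPoint m x (k ν) = 1 := by
  rw [pairedPoint_left, pairedPoint_right, pow_sub_one_mul hm, hx]

theorem pairedPoint_pow (hjk : Bijective (Sum.elim j k)) {m : ℕ} {x : ι → M}
    (hx : ∀ ν, x ν ^ m = 1) (r : κ) : hjk.pairedPoint m x r ^ m = 1 := by
  obtain ⟨ν | ν, rfl⟩ := hjk.2 r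
  · rw [Sum.elim_inl, pairedPoint_left, ← pow_mul, mul_comm, pow_mul, hx, one_pow]
  · rw [Sum.elim_inr, pairedPoint_right, hx]

theorem prod_pairedPoint [Fintype ι] [Fintype κ] (hjk : Bijective (Sum.elim j k)) {m : ℕ}
    (hm : m ≠ 0) {x : ι → M} (hx : ∀ ν, x ν ^ m = 1) : ∏ r, hjk.pairedPoint m x r = 1 := by
  rw [hjk.prod_eq_prod_mul_of_sumElim]
  exact Finset.prod_eq_one fun ν _ ↦ hjk.pairedPoint_mul_pairedPoint hm hx ν

end Function.Bijective

namespace MvPolynomial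

section PowSubOne

variable {R : Type*} [CommRing R] {m : ℕ} {σ : Type*}

variable (R m σ) in
def powSubOneIdeal : Ideal (MvPolynomial σ R) :=
  Ideal.span (Set.range fun i ↦ X i ^ m - 1)

theorem mk_X_pow_eq_one (i : σ) :
    Ideal.Quotient.mk (powSubOneIdeal R m σ) (X i) ^ m = 1 := by
  have h : X i ^ m - 1 ∈ powSubOneIdeal R m σ := Ideal.subset_span ⟨i, rfl⟩
  rwa [← Ideal.Quotient.eq, map_pow, map_one] at h

variable {S : Type*} [CommRing S] [Algebra R S]

variable (R) in
def liftPowSubOne (x : σ → S) (hx : ∀ i, x i ^ m = 1) :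
    MvPolynomial σ R ⧸ powSubOneIdeal R m σ →ₐ[R] S :=
  Ideal.Quotient.liftₐ _ (aeval x) fun _ ha ↦ RingHom.mem_ker.mp <|
    (Ideal.span_le (I := RingHom.ker (aeval x))).mpr (by rintro _ ⟨i, rfl⟩; simp [hx]) ha

@[simp]
theorem liftPowSubOne_mk_X (x : σ → S) (hx : ∀ i, x i ^ m = 1) (i : σ) :
    liftPowSubOne R x hx (Ideal.Quotient.mk _ (X i)) = x i :=
  aeval_X x i

@[ext]
theorem quotient_algHom_ext {I : Ideal (MvPolynomial σ R)} {f g : MvPolynomial σ R ⧸ I →ₐ[R] S}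
    (h : ∀ i, f (Ideal.Quotient.mk I (X i)) = g (Ideal.Quotient.mk I (X i))) : f = g :=
  Ideal.Quotient.algHom_ext R <| algHom_ext h

variable (R m) in
def quotientPowSubOneSuccEquiv (s : ℕ) :
    (MvPolynomial (Fin (s + 1)) R ⧸ powSubOneIdeal R m (Fin (s + 1))) ≃ₐ[R]
      AdjoinRoot (Polynomial.X ^ m - 1 :
        Polynomial (MvPolynomial (Fin s) R ⧸ powSubOneIdeal R m (Fin s))) :=
  AlgEquiv.ofAlgHom
    (liftPowSubOne R
      (Fin.cons (AdjoinRoot.root _) fun i ↦ AdjoinRoot.of _ (Ideal.Quotient.mk _ (X i)))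
      (Fin.cases (AdjoinRoot.root_X_pow_sub_one_pow m)
        fun i ↦ by simp only [Fin.cons_succ]; rw [← map_pow, mk_X_pow_eq_one, map_one]))
    (AdjoinRoot.liftAlgHom _
      (liftPowSubOne R (fun i ↦ Ideal.Quotient.mk _ (X i.succ)) fun _ ↦ mk_X_pow_eq_one _)
      (Ideal.Quotient.mk _ (X 0)) (by simp [mk_X_pow_eq_one]))
    (by ext i <;> simp)
    (by ext i; refine Fin.cases ?_ (fun i ↦ ?_) i <;> simp)

variable [Nontrivial R]

instance : Nontrivial (MvPolynomial σ R ⧸ powSubOneIdeal R m σ) :=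
  (liftPowSubOne R (fun _ ↦ (1 : R)) fun _ ↦ one_pow m).domain_nontrivial

variable (R m) in
def quotientPowSubOneFinZeroEquiv :
    (MvPolynomial (Fin 0) R ⧸ powSubOneIdeal R m (Fin 0)) ≃ₐ[R] R :=
  AlgEquiv.ofAlgHom (liftPowSubOne R Fin.elim0 fun i ↦ i.elim0) (Algebra.ofId R _)
    (Subsingleton.elim _ _) (quotient_algHom_ext fun i ↦ i.elim0)

variable (R) in
theorem nonempty_basis_quotient_powSubOneIdeal (hm : m ≠ 0) (s : ℕ) :
    Nonempty (Module.Basis (Fin (m ^ s)) R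
      (MvPolynomial (Fin s) R ⧸ powSubOneIdeal R m (Fin s))) := by
  induction s with
  | zero =>
    exact ⟨((Module.Basis.singleton (Fin 1) R).map
      (quotientPowSubOneFinZeroEquiv R m).symm.toLinearEquiv).reindex
        (finCongr (pow_zero m).symm)⟩
  | succ s ih =>
    obtain ⟨b⟩ := ih
    have hmonic : (Polynomial.X ^ m - 1 :
        Polynomial (MvPolynomial (Fin s) R ⧸ powSubOneIdeal R m (Fin s))).Monic := by
      simpa using Polynomial.monic_X_pow_sub_C
        (1 : MvPolynomial (Fin s) R ⧸ powSubOneIdeal R m (Fin s)) hm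
    have hdeg : (Polynomial.X ^ m - 1 :
        Polynomial (MvPolynomial (Fin s) R ⧸ powSubOneIdeal R m (Fin s))).natDegree = m := by
      simpa using Polynomial.natDegree_X_pow_sub_C (n := m)
        (r := (1 : MvPolynomial (Fin s) R ⧸ powSubOneIdeal R m (Fin s)))
    exact ⟨((b.smulTower (AdjoinRoot.powerBasis' hmonic).basis).map
      (quotientPowSubOneSuccEquiv R m s).symm.toLinearEquiv).reindex
        (finProdFinEquiv.trans (finCongr (by rw [AdjoinRoot.powerBasis'_dim, hdeg, pow_succ])))⟩

theorem free_quotient_powSubOneIdeal (hm : m ≠ 0) (s : ℕ) :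
    Module.Free R (MvPolynomial (Fin s) R ⧸ powSubOneIdeal R m (Fin s)) :=
  .of_basis (nonempty_basis_quotient_powSubOneIdeal R hm s).some

theorem finrank_quotient_powSubOneIdeal (hm : m ≠ 0) (s : ℕ) :
    Module.finrank R (MvPolynomial (Fin s) R ⧸ powSubOneIdeal R m (Fin s)) = m ^ s := by
  rw [Module.finrank_eq_card_basis (nonempty_basis_quotient_powSubOneIdeal R hm s).some,
    Fintype.card_fin]

end PowSubOne

section Pairing

variable {R : Type*} [CommRing R] {m : ℕ} {ι κ : Type*} [Fintype κ] {j k : ι → κ} {ν₀ : ι}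

variable (R m j k ν₀) in
/-- The ideal defining `R_J`, with `κ = {j ν} ⊔ {k ν}` and the pair relation of `ν₀` (the paper's
pair `0`) left out. -/
def pairingIdeal : Ideal (MvPolynomial κ R) :=
  Ideal.span ((Set.range fun r ↦ (X r : MvPolynomial κ R) ^ m - 1) ∪ {(∏ r, X r) - 1} ∪
    {x | ∃ ν, ν ≠ ν₀ ∧ x = X (j ν) * X (k ν) - 1})

theorem pairingIdeal_mk_X_pow_eq_one (r : κ) :
    Ideal.Quotient.mk (pairingIdeal R m j k ν₀) (X r) ^ m = 1 := by
  have h : X r ^ m - 1 ∈ pairingIdeal R m j k ν₀ := Ideal.subset_span (.inl (.inl ⟨r, rfl⟩))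
  rwa [← Ideal.Quotient.eq, map_pow, map_one] at h

theorem pairingIdeal_mk_X_mul_mk_X [Fintype ι] (hjk : Function.Bijective (Sum.elim j k))
    (ν : ι) :
    Ideal.Quotient.mk (pairingIdeal R m j k ν₀) (X (j ν)) *
      Ideal.Quotient.mk (pairingIdeal R m j k ν₀) (X (k ν)) = 1 := by
  refine hjk.mul_eq_one_of_prod_eq_one_of_sumElim (f := fun r ↦ Ideal.Quotient.mk _ (X r))
    (ν₀ := ν₀) ?_ (fun ν hν ↦ ?_) ν
  · have h : (∏ r, X r) - 1 ∈ pairingIdeal R m j k ν₀ := Ideal.subset_span (.inl (.inr rfl))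
    rwa [← Ideal.Quotient.eq, map_prod, map_one] at h
  · have h : X (j ν) * X (k ν) - 1 ∈ pairingIdeal R m j k ν₀ :=
      Ideal.subset_span (.inr ⟨ν, hν, rfl⟩)
    rwa [← Ideal.Quotient.eq, map_mul, map_one] at h

theorem pairingIdeal_mk_X_left [Fintype ι] (hm : m ≠ 0) (hjk : Function.Bijective (Sum.elim j k))
    (ν : ι) :
    Ideal.Quotient.mk (pairingIdeal R m j k ν₀) (X (j ν)) =
      Ideal.Quotient.mk (pairingIdeal R m j k ν₀) (X (k ν)) ^ (m - 1) :=
  left_inv_eq_right_inv (pairingIdeal_mk_X_mul_mk_X hjk ν)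
    (by rw [mul_pow_sub_one hm, pairingIdeal_mk_X_pow_eq_one])

variable {S : Type*} [CommRing S] [Algebra R S]

variable (R m j k ν₀) in
def liftPairing (y : κ → S) (hpow : ∀ r, y r ^ m = 1) (hprod : ∏ r, y r = 1)
    (hpair : ∀ ν, y (j ν) * y (k ν) = 1) :
    MvPolynomial κ R ⧸ pairingIdeal R m j k ν₀ →ₐ[R] S :=
  Ideal.Quotient.liftₐ _ (aeval y) fun _ ha ↦ RingHom.mem_ker.mp <|
    (Ideal.span_le (I := RingHom.ker (aeval y))).mpr (by
      rintro _ ((⟨r, rfl⟩ | rfl) | ⟨ν, -, rfl⟩) <;> simp [hpow, hprod, hpair]) ha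

@[simp]
theorem liftPairing_mk_X (y : κ → S) (hpow : ∀ r, y r ^ m = 1) (hprod : ∏ r, y r = 1)
    (hpair : ∀ ν, y (j ν) * y (k ν) = 1) (r : κ) :
    liftPairing R m j k ν₀ y hpow hprod hpair (Ideal.Quotient.mk _ (X r)) = y r :=
  aeval_X y r

variable (R ν₀) in
def quotientPowSubOneEquivQuotientPairing [Fintype ι] (hm : m ≠ 0)
    (hjk : Function.Bijective (Sum.elim j k)) :
    (MvPolynomial ι R ⧸ powSubOneIdeal R m ι) ≃ₐ[R]
      MvPolynomial κ R ⧸ pairingIdeal R m j k ν₀ :=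
  AlgEquiv.ofAlgHom
    (liftPowSubOne R (fun ν ↦ Ideal.Quotient.mk _ (X (k ν)))
      fun _ ↦ pairingIdeal_mk_X_pow_eq_one _)
    (liftPairing R m j k ν₀ (hjk.pairedPoint m fun ν ↦ Ideal.Quotient.mk _ (X ν))
      (hjk.pairedPoint_pow mk_X_pow_eq_one) (hjk.prod_pairedPoint hm mk_X_pow_eq_one)
      (hjk.pairedPoint_mul_pairedPoint hm mk_X_pow_eq_one))
    (by
      ext r
      obtain ⟨ν | ν, rfl⟩ := hjk.2 r
      · simp [pairingIdeal_mk_X_left hm hjk]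
      · simp)
    (by ext ν; simp)

theorem quotientPowSubOneEquivQuotientPairing_mk_X [Fintype ι] (hm : m ≠ 0)
    (hjk : Function.Bijective (Sum.elim j k)) (ν : ι) :
    quotientPowSubOneEquivQuotientPairing R ν₀ hm hjk (Ideal.Quotient.mk _ (X ν)) =
      Ideal.Quotient.mk _ (X (k ν)) :=
  liftPowSubOne_mk_X _ (fun _ ↦ pairingIdeal_mk_X_pow_eq_one _) ν

end Pairing

end MvPolynomial

theorem stmt_18_general (m d : ℕ) (hm : 2 ≤ m)
    (j k : Fin (d + 1) → Fin (2 * d + 2))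
    (hbij : Function.Bijective (Sum.elim j k))
    (I : Ideal (MvPolynomial (Fin (2 * d + 2)) ℤ))
    (hI : I = Ideal.span
      ((Set.range fun i : Fin (2 * d + 2) => (X i : MvPolynomial (Fin (2 * d + 2)) ℤ) ^ m - 1) ∪
        {(∏ i, X i) - 1} ∪
        {x | ∃ ν : Fin (d + 1), ν ≠ 0 ∧ x = X (j ν) * X (k ν) - 1}))
    (I' : Ideal (MvPolynomial (Fin (d + 1)) ℤ))
    (hI' : I' = Ideal.span
      (Set.range fun i : Fin (d + 1) => (X i : MvPolynomial (Fin (d + 1)) ℤ) ^ m - 1)) :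
    (∃ g : (MvPolynomial (Fin (d + 1)) ℤ ⧸ I') →+* (MvPolynomial (Fin (2 * d + 2)) ℤ ⧸ I),
      (∀ i : Fin (d + 1), g (Ideal.Quotient.mk I' (X i)) = Ideal.Quotient.mk I (X (k i))) ∧
      Function.Bijective g) ∧
    Module.Free ℤ (MvPolynomial (Fin (2 * d + 2)) ℤ ⧸ I) ∧
    Module.finrank ℤ (MvPolynomial (Fin (2 * d + 2)) ℤ ⧸ I) = m ^ (d + 1) := by
  subst hI hI'
  have hm₀ : m ≠ 0 := by omega
  let e := quotientPowSubOneEquivQuotientPairing ℤ 0 hm₀ hbij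
  have := free_quotient_powSubOneIdeal (R := ℤ) hm₀ (d + 1)
  exact ⟨⟨e.toRingHom, quotientPowSubOneEquivQuotientPairing_mk_X hm₀ hbij, e.bijective⟩,
    .of_equiv e.toLinearEquiv,
    e.toLinearEquiv.finrank_eq.symm.trans (finrank_quotient_powSubOneIdeal hm₀ (d + 1))⟩

/-- For a partition `J` of `{0,…,n+1}` (`n = 2d`) into pairs `[j_i,k_i]`, in the ring
`R_J = ℤ[t_0,…,t_{n+1}]/(t_0⋯t_{n+1}-1, t_i^m-1, t_{j_1}t_{k_1}-1,…,t_{j_d}t_{k_d}-1)` the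
natural map from `ℤ[t_{k_0},…,t_{k_d}]/(t_{k_0}^m-1,…,t_{k_d}^m-1)` sending the `i`-th
variable to `t_{k_i}` is a ring isomorphism; in particular `R_J` is a free `ℤ`-module of
rank `m^{d+1}`. -/
theorem stmt_18 (m d : ℕ) (hm : 2 ≤ m)
    (j k : Fin (d + 1) → Fin (2 * d + 2))
    (hjk : ∀ i, j i < k i) (hj : StrictMono j)
    (hbij : Function.Bijective (Sum.elim j k))
    (I : Ideal (MvPolynomial (Fin (2 * d + 2)) ℤ))
    (hI : I = Ideal.span
      ((Set.range fun i : Fin (2 * d + 2) => (X i : MvPolynomial (Fin (2 * d + 2)) ℤ) ^ m - 1) ∪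
        {(∏ i, X i) - 1} ∪
        {x | ∃ ν : Fin (d + 1), ν ≠ 0 ∧ x = X (j ν) * X (k ν) - 1}))
    (I' : Ideal (MvPolynomial (Fin (d + 1)) ℤ))
    (hI' : I' = Ideal.span
      (Set.range fun i : Fin (d + 1) => (X i : MvPolynomial (Fin (d + 1)) ℤ) ^ m - 1)) :
    (∃ g : (MvPolynomial (Fin (d + 1)) ℤ ⧸ I') →+* (MvPolynomial (Fin (2 * d + 2)) ℤ ⧸ I),
      (∀ i : Fin (d + 1), g (Ideal.Quotient.mk I' (X i)) = Ideal.Quotient.mk I (X (k i))) ∧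
      Function.Bijective g) ∧
    Module.Free ℤ (MvPolynomial (Fin (2 * d + 2)) ℤ ⧸ I) ∧
    Module.finrank ℤ (MvPolynomial (Fin (2 * d + 2)) ℤ ⧸ I) = m ^ (d + 1) :=
  stmt_18_general m d hm j k hbij I hI I' hI'

end
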